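/- Let G be a digraph on n vertices with diameter d(G), and for each vertex u let r(u) be the number of vertices other than u that are reachable from u, with r(G) = Σ_{u∈V} r(u). Then there exists a labeling λ of G satisfying the reach property, using labels in {1, …, d(G)} (hence age at most d(G)), with total number of labels Σ_{e∈E} |λ(e)| = r(G); hence κ(G, reach, d(G)) ≤ r(G). -/
import Mathlib


/-- `w` is a simple path of the digraph with edge relation `E`: a sequence of
`k + 1` distinct vertices joined by consecutive edges. -/
def IsPath {V : Type*} (E : V → V → Prop) {k : ℕ} (w : Fin (k + 1) → V) : Prop :=
  Function.Injective w ∧ ∀ i : Fin k, E (w i.castSucc) (w i.succ)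

/-- The labeling `lab` preserves the path `w`: there is a strictly increasing
choice of labels along the consecutive edges of `w`. -/
def Preserves {V : Type*} (lab : V → V → Finset ℕ) {k : ℕ} (w : Fin (k + 1) → V) : Prop :=
  ∃ l : Fin k → ℕ, StrictMono l ∧ ∀ i : Fin k, l i ∈ lab (w i.castSucc) (w i.succ)

/-- The labeling `lab` preserves every simple path of the digraph `E`
(the "all paths" property). -/
def PreservesAll {V : Type*} (E : V → V → Prop) (lab : V → V → Finset ℕ) : Prop :=
  ∀ (k : ℕ) (w : Fin (k + 1) → V), IsPath E w → Preserves lab w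

/-- The labeling `lab` satisfies the reach property of the digraph `E`: for every
ordered pair `(u, v)` with `v` reachable from `u`, it preserves at least one
simple path from `u` to `v`. -/
def ReachProp {V : Type*} (E : V → V → Prop) (lab : V → V → Finset ℕ) : Prop :=
  ∀ u v : V, Relation.ReflTransGen E u v →
    ∃ (k : ℕ) (w : Fin (k + 1) → V),
      IsPath E w ∧ w 0 = u ∧ w (Fin.last k) = v ∧ Preserves lab w


namespace ReachAux

attribute [local instance] Classical.propDecidable

variable {V : Type*}

/-- Walk of length `k` from `u` to `v`, built at the end. -/
def Walk (E : V → V → Prop) : ℕ → V → V → Prop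
  | 0, u, v => u = v
  | k+1, u, v => ∃ a, Walk E k u a ∧ E a v

lemma walk_reach {E : V → V → Prop} : ∀ {k u v}, Walk E k u v → Relation.ReflTransGen E u v
  | 0, u, v, h => by rw [h]
  | k+1, u, v, ⟨a, hw, he⟩ => (walk_reach hw).tail he

lemma reach_walk {E : V → V → Prop} {u v : V} (h : Relation.ReflTransGen E u v) :
    ∃ k, Walk E k u v := by
  induction h with
  | refl => exact ⟨0, rfl⟩
  | tail _ he ih => exact ⟨ih.choose + 1, _, ih.choose_spec, he⟩

noncomputable def dist (E : V → V → Prop) (u v : V) : ℕ :=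
  if h : ∃ k, Walk E k u v then Nat.find h else 0

lemma walk_dist {E : V → V → Prop} {u v : V} (h : Relation.ReflTransGen E u v) :
    Walk E (dist E u v) u v := by
  have h' := reach_walk h
  rw [dist, dif_pos h']
  exact Nat.find_spec h'

lemma dist_le {E : V → V → Prop} {u v : V} {k : ℕ} (h : Walk E k u v) :
    dist E u v ≤ k := by
  rw [dist, dif_pos ⟨k, h⟩]
  exact Nat.find_le h

lemma dist_pos {E : V → V → Prop} {u v : V} (h : Relation.ReflTransGen E u v) (hne : v ≠ u) :
    0 < dist E u v := by
  rcases Nat.eq_zero_or_pos (dist E u v) with h0 | h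
  · exact absurd (by have := walk_dist h; rwa [h0] at this) (Ne.symm hne)
  · exact h

noncomputable def parent (E : V → V → Prop) (u v : V) : V :=
  if h : ∃ a, Walk E (dist E u v - 1) u a ∧ E a v then Classical.choose h else v

lemma parent_spec {E : V → V → Prop} {u v : V} (h : Relation.ReflTransGen E u v)
    (hne : v ≠ u) :
    Walk E (dist E u v - 1) u (parent E u v) ∧ E (parent E u v) v := by
  have hw := walk_dist h
  have hpos := dist_pos h hne
  obtain ⟨m, hm⟩ := Nat.exists_eq_add_of_lt hpos
  rw [zero_add] at hm
  rw [hm] at hw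
  obtain ⟨a, hwa, hav⟩ := hw
  have hex : ∃ a, Walk E (dist E u v - 1) u a ∧ E a v := ⟨a, by rw [hm]; exact ⟨hwa, hav⟩⟩
  rw [parent, dif_pos hex]
  exact Classical.choose_spec hex

lemma dist_parent {E : V → V → Prop} {u v : V} (h : Relation.ReflTransGen E u v)
    (hne : v ≠ u) : dist E u (parent E u v) = dist E u v - 1 := by
  obtain ⟨hw, he⟩ := parent_spec h hne
  refine le_antisymm (dist_le hw) ?_
  by_contra hlt
  push_neg at hlt
  have hwp := walk_dist (walk_reach hw)
  have : Walk E (dist E u (parent E u v) + 1) u v := ⟨_, hwp, he⟩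
  have := dist_le this
  omega

lemma reach_parent {E : V → V → Prop} {u v : V} (h : Relation.ReflTransGen E u v)
    (hne : v ≠ u) : Relation.ReflTransGen E u (parent E u v) :=
  walk_reach (parent_spec h hne).1

lemma finwalk_walk (E : V → V → Prop) :
    ∀ (k : ℕ) (w : Fin (k+1) → V), (∀ i : Fin k, E (w i.castSucc) (w i.succ)) →
      Walk E k (w 0) (w (Fin.last k))
  | 0, w, _ => rfl
  | k+1, w, h => by
    refine ⟨w ((Fin.last k).castSucc), ?_, ?_⟩
    · have := finwalk_walk E k (w ∘ Fin.castSucc) (fun i => by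
        have := h i.castSucc
        rwa [Fin.succ_castSucc] at this)
      simpa using this
    · have := h (Fin.last k)
      rwa [Fin.succ_last] at this

/-- Main path construction: a shortest path tree path from `u` to `v` where
vertex `i` is at distance `i` and each vertex's parent (w.r.t. `u`) is the
previous one. -/
lemma exists_good_path {E : V → V → Prop} :
    ∀ (k : ℕ) (u v : V), Relation.ReflTransGen E u v → dist E u v = k →
      ∃ w : Fin (k+1) → V, w 0 = u ∧ w (Fin.last k) = v ∧
        (∀ i : Fin (k+1), dist E u (w i) = i) ∧
        (∀ i : Fin k, w i.succ ≠ u ∧ parent E u (w i.succ) = w i.castSucc ∧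
          Relation.ReflTransGen E u (w i.succ) ∧ E (w i.castSucc) (w i.succ))
  | 0, u, v, h, hk => by
    have : u = v := by have := walk_dist h; rwa [hk] at this
    subst this
    refine ⟨fun _ => u, rfl, rfl, fun i => ?_, fun i => i.elim0⟩
    have : dist E u u = 0 := Nat.le_zero.mp (dist_le (show Walk E 0 u u from rfl))
    simp [this, Fin.eq_zero i]
  | k+1, u, v, h, hk => by
    have hne : v ≠ u := by
      intro hvu
      have h0 : dist E u u = 0 := Nat.le_zero.mp (dist_le (show Walk E 0 u u from rfl))
      rw [hvu] at hk
      omega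
    have hp := parent_spec h hne
    have hdp : dist E u (parent E u v) = k := by simp [dist_parent h hne, hk]
    have hrp := reach_parent h hne
    obtain ⟨w', h0, hl, hdist, hstep⟩ := exists_good_path k u (parent E u v) hrp hdp
    refine ⟨Fin.snoc w' v, ?_, ?_, ?_, ?_⟩
    · have h00 : (0 : Fin (k+2)) = (0 : Fin (k+1)).castSucc := rfl
      rw [h00, Fin.snoc_castSucc]; exact h0
    · simp
    · intro i
      refine Fin.lastCases ?_ (fun j => ?_) i
      · simpa using hk
      · rw [Fin.snoc_castSucc]
        simpa using hdist j
    · intro i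
      refine Fin.lastCases ?_ (fun j => ?_) i
      · rw [Fin.succ_last, Fin.snoc_last, Fin.snoc_castSucc, hl]
        exact ⟨hne, rfl, h, hp.2⟩
      · rw [Fin.succ_castSucc, Fin.snoc_castSucc, Fin.snoc_castSucc]
        exact hstep j

end ReachAux

open ReachAux

/-- Let `G` be a digraph whose diameter is at most `d`, i.e. every reachable pair
is joined by a directed walk of length at most `d`. For each vertex `u` let
`r(u)` be the number of vertices other than `u` reachable from `u`. Then there
is a labeling satisfying the reach property, using labels in `{1, …, d}` (hence
of age at most `d`), whose total number of labels is at most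
`r(G) = ∑_u r(u)`; hence κ(G, reach, d(G)) ≤ r(G). -/

theorem reach_labeling_cost_le_reachabilities {V : Type*} [Fintype V]
    (E : V → V → Prop) (d : ℕ)
    (hd : ∀ u v : V, Relation.ReflTransGen E u v →
      ∃ (k : ℕ) (w : Fin (k + 1) → V), k ≤ d ∧ w 0 = u ∧ w (Fin.last k) = v ∧
        ∀ i : Fin k, E (w i.castSucc) (w i.succ)) :
    ∃ lab : V → V → Finset ℕ,
      ReachProp E lab ∧
      (∀ u v, ∀ t ∈ lab u v, 1 ≤ t ∧ t ≤ d) ∧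
      (∑ u : V, ∑ v : V, (lab u v).card) ≤
        ∑ u : V, Nat.card {v : V | v ≠ u ∧ Relation.ReflTransGen E u v} := by
  classical
  refine ⟨fun a b => (Finset.univ.filter fun u =>
      Relation.ReflTransGen E u b ∧ b ≠ u ∧ parent E u b = a).image
      (fun u => dist E u b), ?_, ?_, ?_⟩
  · -- reach property
    intro u v h
    obtain ⟨w, h0, hl, hdist, hstep⟩ := exists_good_path (dist E u v) u v h rfl
    refine ⟨dist E u v, w, ⟨?_, fun i => (hstep i).2.2.2⟩, h0, hl, ?_⟩
    · intro i j hij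
      have : (i : ℕ) = (j : ℕ) := by rw [← hdist i, ← hdist j, hij]
      exact Fin.ext this
    · refine ⟨fun i => (i : ℕ) + 1, ?_, ?_⟩
      · intro i j hij
        have : (i : ℕ) < (j : ℕ) := hij
        simpa using Nat.succ_lt_succ this
      · intro i
        simp only [Finset.mem_image, Finset.mem_filter, Finset.mem_univ, true_and]
        refine ⟨u, ⟨(hstep i).2.2.1, (hstep i).1, (hstep i).2.1⟩, ?_⟩
        have := hdist i.succ
        rwa [Fin.val_succ] at this
  · -- label bounds
    intro a b t ht
    simp only [Finset.mem_image, Finset.mem_filter, Finset.mem_univ, true_and] at ht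
    obtain ⟨u, ⟨hr, hne, -⟩, rfl⟩ := ht
    constructor
    · exact dist_pos hr hne
    · obtain ⟨k, w, hk, h0, hl, hedges⟩ := hd u b hr
      have := finwalk_walk E k w hedges
      rw [h0, hl] at this
      exact le_trans (dist_le this) hk
  · -- counting
    have hle : ∀ a b : V, ((Finset.univ.filter fun u =>
        Relation.ReflTransGen E u b ∧ b ≠ u ∧ parent E u b = a).image
        (fun u => dist E u b)).card ≤ (Finset.univ.filter fun u =>
        Relation.ReflTransGen E u b ∧ b ≠ u ∧ parent E u b = a).card :=
      fun a b => Finset.card_image_le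
    calc ∑ a : V, ∑ b : V, ((Finset.univ.filter fun u =>
            Relation.ReflTransGen E u b ∧ b ≠ u ∧ parent E u b = a).image
            (fun u => dist E u b)).card
        ≤ ∑ a : V, ∑ b : V, (Finset.univ.filter fun u =>
            Relation.ReflTransGen E u b ∧ b ≠ u ∧ parent E u b = a).card :=
          Finset.sum_le_sum fun a _ => Finset.sum_le_sum fun b _ => hle a b
      _ = ∑ b : V, ∑ a : V, (Finset.univ.filter fun u =>
            Relation.ReflTransGen E u b ∧ b ≠ u ∧ parent E u b = a).card :=
          Finset.sum_comm
      _ = ∑ b : V, (Finset.univ.filter fun u =>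
            Relation.ReflTransGen E u b ∧ b ≠ u).card := by
          refine Finset.sum_congr rfl fun b _ => ?_
          rw [Finset.card_eq_sum_card_fiberwise
            (f := fun u => parent E u b) (t := Finset.univ) (fun x _ => Finset.mem_univ _)]
          refine Finset.sum_congr rfl fun a _ => ?_
          congr 1
          ext u
          simp only [Finset.mem_filter, Finset.mem_univ, true_and]
          tauto
      _ = ∑ b : V, ∑ u : V, (if Relation.ReflTransGen E u b ∧ b ≠ u then 1 else 0) := by
          refine Finset.sum_congr rfl fun b _ => ?_
          rw [Finset.card_filter]
      _ = ∑ u : V, ∑ b : V, (if Relation.ReflTransGen E u b ∧ b ≠ u then 1 else 0) :=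
          Finset.sum_comm
      _ = ∑ u : V, Nat.card {v : V | v ≠ u ∧ Relation.ReflTransGen E u v} := by
          refine Finset.sum_congr rfl fun u _ => ?_
          rw [← Finset.card_filter]
          rw [Nat.card_eq_fintype_card, Fintype.card_subtype]
          congr 1
          ext b
          simp only [Finset.mem_filter, Finset.mem_univ, true_and, Set.mem_setOf_eq]
          tauto
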